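/- Equality in the log-convexity inequality ‖f₁f₂‖_{A²_{α₁+α₂}} ≤ ‖f₁‖_{A²_{α₁}}·‖f₂‖_{A²_{α₂}} (with both right-hand factors finite and nonzero) holds if and only if there exist constants λ₁, λ₂ ∈ ℂ and w in the unit disc such that fⱼ(z) = λⱼ(1-wz)^{-αⱼ} for j = 1, 2. -/

import Mathlib

/-!
The weights `c_{α₁}(i) c_{α₂}(j)`, `i + j = n`, sum to `c_{α₁+α₂}(n)` (Chu–Vandermonde), so the
weighted Cauchy–Schwarz inequality bounds the `n`-th term of `‖f₁f₂‖²` by the `n`-th term of the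
Cauchy product of the series for `‖f₁‖²` and `‖f₂‖²`. Hence equality of norms means equality in
Cauchy–Schwarz for every `n`: `a₁(i) a₂(j) / (c_{α₁}(i) c_{α₂}(j))` depends only on `i + j`.
Such a rank-one Hankel matrix is geometric, which gives `aⱼ(n) = λⱼ c_{αⱼ}(n) wⁿ`; finiteness of
`‖f₁‖` together with `c_{α₁} ≥ 1` then forces `‖w‖ < 1`.
-/

noncomputable section

/-- The `n`-th Taylor coefficient of `(1-z)^{-α}`. -/
def binCoeff (α : ℝ) (n : ℕ) : ℝ := Real.Gamma (n + α) / (Real.Gamma α * n.factorial)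

open Finset Polynomial

theorem Real.Gamma_add_nat_div_Gamma_eq {x : ℝ} (hx : 0 < x) (n : ℕ) :
    Real.Gamma (n + x) / Real.Gamma x = (ascPochhammer ℝ n).eval x := by
  induction n with
  | zero => simp [(Real.Gamma_pos_of_pos hx).ne']
  | succ n ih =>
    rw [ascPochhammer_succ_eval, ← ih, Nat.cast_succ, add_right_comm,
      Real.Gamma_add_one (by positivity)]
    ring

theorem monotoneOn_ascPochhammer_eval {S : Type*} [Semiring S] [PartialOrder S]
    [IsStrictOrderedRing S] (n : ℕ) : MonotoneOn (ascPochhammer S n).eval (Set.Ioi 0) := by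
  induction n with
  | zero => simp [monotoneOn_const]
  | succ n ih =>
    intro x hx y hy hxy
    simp only [ascPochhammer_succ_eval]
    exact mul_le_mul (ih hx hy hxy) (add_le_add_left hxy _) (by positivity [hx.out.le])
      (ascPochhammer_pos n y hy).le

theorem Ring.multichoose_add {R : Type*} [Ring R] [BinomialRing R] {r s : R} (h : Commute r s)
    (n : ℕ) :
    multichoose (r + s) n = ∑ p ∈ antidiagonal n, multichoose r p.1 * multichoose s p.2 := by
  have := add_choose_eq n h.neg_left.neg_right
  rw [← neg_add, choose_neg'] at this
  apply (smul_left_cancel_iff (Int.negOnePow n)).mp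
  rw [this, smul_sum]
  refine sum_congr rfl fun p hp => ?_
  rw [choose_neg', choose_neg', smul_mul_smul_comm, ← mem_antidiagonal.mp hp, Nat.cast_add,
    Int.negOnePow_add]

section binCoeff

variable {α : ℝ}

theorem binCoeff_eq_ascPochhammer_eval_div (hα : 0 < α) (n : ℕ) :
    binCoeff α n = (ascPochhammer ℝ n).eval α / n.factorial := by
  rw [binCoeff, ← div_div, Real.Gamma_add_nat_div_Gamma_eq hα]

theorem binCoeff_pos (hα : 0 < α) (n : ℕ) : 0 < binCoeff α n := by
  rw [binCoeff_eq_ascPochhammer_eval_div hα]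
  exact div_pos (ascPochhammer_pos n α hα) (by positivity)

theorem one_le_binCoeff (hα : 1 ≤ α) (n : ℕ) : 1 ≤ binCoeff α n := by
  rw [binCoeff_eq_ascPochhammer_eval_div (by linarith), one_le_div (by positivity),
    ← ascPochhammer_eval_one]
  exact monotoneOn_ascPochhammer_eval n one_pos (show (0 : ℝ) < α by linarith) hα

theorem binCoeff_eq_multichoose (hα : 0 < α) (n : ℕ) : binCoeff α n = Ring.multichoose α n := by
  rw [binCoeff_eq_ascPochhammer_eval_div hα, ← ascPochhammer_smeval_eq_eval,
    ← Ring.factorial_nsmul_multichoose_eq_ascPochhammer, nsmul_eq_mul,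
    mul_div_cancel_left₀ _ (by positivity)]

theorem binCoeff_add {β : ℝ} (hα : 0 < α) (hβ : 0 < β) (n : ℕ) :
    binCoeff (α + β) n = ∑ p ∈ antidiagonal n, binCoeff α p.1 * binCoeff β p.2 := by
  simp only [binCoeff_eq_multichoose (add_pos hα hβ), binCoeff_eq_multichoose hα,
    binCoeff_eq_multichoose hβ]
  exact Ring.multichoose_add (Commute.all α β) n

end binCoeff

section CauchySchwarz

variable {ι E : Type*} [NormedAddCommGroup E] [InnerProductSpace ℝ E] {s : Finset ι}
  {A : ι → E} {B : ι → ℝ}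

theorem sum_norm_sq_div_sub_norm_sum_sq_div (hB : ∀ p ∈ s, B p ≠ 0) :
    ∑ p ∈ s, ‖A p‖ ^ 2 / B p - ‖∑ p ∈ s, A p‖ ^ 2 / ∑ p ∈ s, B p =
      ∑ p ∈ s, ‖A p - (B p / ∑ q ∈ s, B q) • ∑ q ∈ s, A q‖ ^ 2 / B p := by
  set T := ∑ q ∈ s, A q
  set c := ∑ q ∈ s, B q
  have hterm : ∀ p ∈ s, ‖A p - (B p / c) • T‖ ^ 2 / B p =
      ‖A p‖ ^ 2 / B p - 2 * c⁻¹ * inner ℝ (A p) T + B p * (c⁻¹ ^ 2 * ‖T‖ ^ 2) := by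
    intro p hp
    rw [norm_sub_sq_real, real_inner_smul_right, norm_smul, Real.norm_eq_abs, mul_pow, sq_abs]
    field_simp [hB p hp]
  rw [sum_congr rfl hterm, sum_add_distrib, sum_sub_distrib, ← mul_sum, ← sum_mul, ← sum_inner,
    real_inner_self_eq_norm_sq]
  rcases eq_or_ne c 0 with hc | hc
  · simp [hc]
  · field_simp
    ring

theorem norm_sum_sq_div_le (hB : ∀ p ∈ s, 0 < B p) :
    ‖∑ p ∈ s, A p‖ ^ 2 / ∑ p ∈ s, B p ≤ ∑ p ∈ s, ‖A p‖ ^ 2 / B p := by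
  have hdefect := sum_norm_sq_div_sub_norm_sum_sq_div (A := A) fun p hp => (hB p hp).ne'
  have hnonneg : 0 ≤ ∑ p ∈ s, ‖A p - (B p / ∑ q ∈ s, B q) • ∑ q ∈ s, A q‖ ^ 2 / B p :=
    sum_nonneg fun p hp => div_nonneg (sq_nonneg _) (hB p hp).le
  linarith

theorem norm_sum_sq_div_eq_iff (hB : ∀ p ∈ s, 0 < B p) :
    ‖∑ p ∈ s, A p‖ ^ 2 / ∑ p ∈ s, B p = ∑ p ∈ s, ‖A p‖ ^ 2 / B p ↔
      ∃ v : E, ∀ p ∈ s, A p = B p • v := by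
  constructor
  · intro heq
    have hdefect := sum_norm_sq_div_sub_norm_sum_sq_div (A := A) fun p hp => (hB p hp).ne'
    rw [heq, sub_self, eq_comm,
      sum_eq_zero_iff_of_nonneg fun p hp => div_nonneg (sq_nonneg _) (hB p hp).le] at hdefect
    refine ⟨(∑ q ∈ s, B q)⁻¹ • ∑ q ∈ s, A q, fun p hp => ?_⟩
    have hp_zero := hdefect p hp
    rw [div_eq_zero_iff, sq_eq_zero_iff, norm_eq_zero, sub_eq_zero] at hp_zero
    rw [smul_smul, ← div_eq_mul_inv]
    exact hp_zero.resolve_right (hB p hp).ne'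
  · rintro ⟨v, hv⟩
    have hsq : ∀ b : ℝ, ‖b • v‖ ^ 2 / b = b * ‖v‖ ^ 2 := fun b => by
      rw [norm_smul, Real.norm_eq_abs, mul_pow, sq_abs]
      rcases eq_or_ne b 0 with hb | hb
      · simp [hb]
      · field_simp
    calc ‖∑ p ∈ s, A p‖ ^ 2 / ∑ p ∈ s, B p = ‖(∑ p ∈ s, B p) • v‖ ^ 2 / ∑ p ∈ s, B p := by
          rw [sum_congr rfl hv, sum_smul]
      _ = ∑ p ∈ s, B p * ‖v‖ ^ 2 := by rw [hsq, sum_mul]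
      _ = ∑ p ∈ s, ‖A p‖ ^ 2 / B p := sum_congr rfl fun p hp => by rw [hv p hp, hsq]

end CauchySchwarz

theorem tsum_eq_tsum_iff_of_le {ι : Type*} {f g : ι → ℝ} (h0 : ∀ i, 0 ≤ f i)
    (hle : ∀ i, f i ≤ g i) (hg : Summable g) : ∑' i, f i = ∑' i, g i ↔ ∀ i, f i = g i := by
  refine ⟨fun heq i => ?_, fun h => tsum_congr h⟩
  by_contra hne
  exact (Summable.tsum_lt_tsum hle (lt_of_le_of_ne (hle i) hne)
    (hg.of_nonneg_of_le h0 hle) hg).ne heq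

theorem exists_geometric_of_mul_succ_eq {K : Type*} [Field K] {s r : ℕ → K}
    (h : ∀ i j, s (i + 1) * r j = s i * r (j + 1)) (hs : s ≠ 0) (hr : r ≠ 0) :
    ∃ w : K, ∀ n, s n = s 0 * w ^ n ∧ r n = r 0 * w ^ n := by
  obtain ⟨i₀, hi₀⟩ := Function.ne_iff.mp hs
  obtain ⟨j₀, hj₀⟩ := Function.ne_iff.mp hr
  set w := r (j₀ + 1) / r j₀
  have hs_succ : ∀ i, s (i + 1) = s i * w := fun i => by
    rw [mul_div_assoc', eq_div_iff hj₀, h]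
  have hr_succ : ∀ j, r (j + 1) = r j * w := fun j =>
    mul_left_cancel₀ hi₀ (by rw [← h, hs_succ]; ring)
  refine ⟨w, fun n => ?_⟩
  induction n with
  | zero => simp
  | succ n ih =>
    exact ⟨by rw [hs_succ, ih.1, pow_succ, mul_assoc], by rw [hr_succ, ih.2, pow_succ, mul_assoc]⟩

theorem Real.rpow_half_eq_mul_rpow_half_iff {x y z : ℝ} (hx : 0 ≤ x) (hy : 0 ≤ y) (hz : 0 ≤ z) :
    x ^ (1 / 2 : ℝ) = y ^ (1 / 2 : ℝ) * z ^ (1 / 2 : ℝ) ↔ x = y * z := by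
  rw [← Real.sqrt_eq_rpow, ← Real.sqrt_eq_rpow, ← Real.sqrt_eq_rpow, ← Real.sqrt_mul hy,
    Real.sqrt_inj hx (mul_nonneg hy hz)]

/-- The `n`-th term of `‖∑ aₙ zⁿ‖²` in `A²_α`. -/
def bergmanTerm (α : ℝ) (a : ℕ → ℂ) (n : ℕ) : ℝ := ‖a n‖ ^ 2 / binCoeff α n

def cauchyProduct (a b : ℕ → ℂ) (n : ℕ) : ℂ := ∑ p ∈ antidiagonal n, a p.1 * b p.2

section Bergman

variable {α α₁ α₂ : ℝ} {a a₁ a₂ : ℕ → ℂ}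

theorem bergmanTerm_nonneg (hα : 0 < α) (a : ℕ → ℂ) (n : ℕ) : 0 ≤ bergmanTerm α a n :=
  div_nonneg (sq_nonneg _) (binCoeff_pos hα n).le

theorem bergmanTerm_cauchyProduct (hα₁ : 0 < α₁) (hα₂ : 0 < α₂) (n : ℕ) :
    bergmanTerm (α₁ + α₂) (cauchyProduct a₁ a₂) n =
      ‖∑ p ∈ antidiagonal n, a₁ p.1 * a₂ p.2‖ ^ 2 /
        ∑ p ∈ antidiagonal n, binCoeff α₁ p.1 * binCoeff α₂ p.2 := by
  rw [bergmanTerm, binCoeff_add hα₁ hα₂, cauchyProduct]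

theorem sum_bergmanTerm_mul_bergmanTerm (n : ℕ) :
    ∑ p ∈ antidiagonal n, bergmanTerm α₁ a₁ p.1 * bergmanTerm α₂ a₂ p.2 =
      ∑ p ∈ antidiagonal n, ‖a₁ p.1 * a₂ p.2‖ ^ 2 / (binCoeff α₁ p.1 * binCoeff α₂ p.2) := by
  simp only [bergmanTerm, norm_mul, mul_pow, div_mul_div_comm]

theorem bergmanTerm_cauchyProduct_le (hα₁ : 0 < α₁) (hα₂ : 0 < α₂) (n : ℕ) :
    bergmanTerm (α₁ + α₂) (cauchyProduct a₁ a₂) n ≤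
      ∑ p ∈ antidiagonal n, bergmanTerm α₁ a₁ p.1 * bergmanTerm α₂ a₂ p.2 := by
  rw [bergmanTerm_cauchyProduct hα₁ hα₂, sum_bergmanTerm_mul_bergmanTerm]
  exact norm_sum_sq_div_le fun p _ => mul_pos (binCoeff_pos hα₁ _) (binCoeff_pos hα₂ _)

theorem bergmanTerm_cauchyProduct_eq_iff (hα₁ : 0 < α₁) (hα₂ : 0 < α₂) (n : ℕ) :
    bergmanTerm (α₁ + α₂) (cauchyProduct a₁ a₂) n =
        ∑ p ∈ antidiagonal n, bergmanTerm α₁ a₁ p.1 * bergmanTerm α₂ a₂ p.2 ↔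
      ∃ v : ℂ, ∀ p ∈ antidiagonal n,
        a₁ p.1 * a₂ p.2 = (binCoeff α₁ p.1 * binCoeff α₂ p.2) • v := by
  rw [bergmanTerm_cauchyProduct hα₁ hα₂, sum_bergmanTerm_mul_bergmanTerm]
  exact norm_sum_sq_div_eq_iff fun p _ => mul_pos (binCoeff_pos hα₁ _) (binCoeff_pos hα₂ _)

theorem tsum_bergmanTerm_cauchyProduct_eq_iff (hα₁ : 0 < α₁) (hα₂ : 0 < α₂)
    (hs₁ : Summable (bergmanTerm α₁ a₁)) (hs₂ : Summable (bergmanTerm α₂ a₂)) :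
    ∑' n, bergmanTerm (α₁ + α₂) (cauchyProduct a₁ a₂) n =
        (∑' n, bergmanTerm α₁ a₁ n) * ∑' n, bergmanTerm α₂ a₂ n ↔
      ∀ n : ℕ, ∃ v : ℂ, ∀ p ∈ antidiagonal n,
        a₁ p.1 * a₂ p.2 = (binCoeff α₁ p.1 * binCoeff α₂ p.2) • v := by
  have hprod := hs₁.mul_of_nonneg hs₂ (bergmanTerm_nonneg hα₁ a₁) (bergmanTerm_nonneg hα₂ a₂)
  rw [hs₁.tsum_mul_tsum_eq_tsum_sum_antidiagonal hs₂ hprod,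
    tsum_eq_tsum_iff_of_le (bergmanTerm_nonneg (add_pos hα₁ hα₂) _)
      (bergmanTerm_cauchyProduct_le hα₁ hα₂) (summable_sum_mul_antidiagonal_of_summable_mul hprod)]
  exact forall_congr' (bergmanTerm_cauchyProduct_eq_iff hα₁ hα₂)

theorem exists_geometric_iff_forall_mul_eq_smul {c₁ c₂ : ℕ → ℝ} (hc₁ : ∀ n, c₁ n ≠ 0)
    (hc₂ : ∀ n, c₂ n ≠ 0) (ha₁ : a₁ ≠ 0) (ha₂ : a₂ ≠ 0) :
    (∀ n : ℕ, ∃ v : ℂ, ∀ p ∈ antidiagonal n, a₁ p.1 * a₂ p.2 = (c₁ p.1 * c₂ p.2) • v) ↔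
      ∃ l₁ l₂ w : ℂ, (∀ n, a₁ n = l₁ * c₁ n * w ^ n) ∧ (∀ n, a₂ n = l₂ * c₂ n * w ^ n) := by
  constructor
  · intro h
    choose v hv using h
    set s : ℕ → ℂ := fun n => a₁ n / c₁ n
    set r : ℕ → ℂ := fun n => a₂ n / c₂ n
    have hc₁' : ∀ n, (c₁ n : ℂ) ≠ 0 := fun n => Complex.ofReal_ne_zero.mpr (hc₁ n)
    have hc₂' : ∀ n, (c₂ n : ℂ) ≠ 0 := fun n => Complex.ofReal_ne_zero.mpr (hc₂ n)
    have hsr : ∀ i j, s i * r j = v (i + j) := fun i j => by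
      have hij := hv (i + j) (i, j) (mem_antidiagonal.mpr rfl)
      rw [Complex.real_smul, Complex.ofReal_mul] at hij
      simp only [s, r]
      field_simp [hc₁' i, hc₂' j]
      linear_combination hij
    have hs : s ≠ 0 := fun hs => ha₁ (funext fun n => by
      simpa [s, hc₁' n] using congrFun hs n)
    have hr : r ≠ 0 := fun hr => ha₂ (funext fun n => by
      simpa [r, hc₂' n] using congrFun hr n)
    obtain ⟨w, hw⟩ := exists_geometric_of_mul_succ_eq
      (fun i j => by rw [hsr, hsr, add_right_comm, add_assoc]) hs hr
    refine ⟨s 0, r 0, w, fun n => ?_, fun n => ?_⟩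
    · rw [mul_right_comm, ← (hw n).1, div_mul_cancel₀ _ (hc₁' n)]
    · rw [mul_right_comm, ← (hw n).2, div_mul_cancel₀ _ (hc₂' n)]
  · rintro ⟨l₁, l₂, w, e₁, e₂⟩ n
    refine ⟨l₁ * l₂ * w ^ n, fun p hp => ?_⟩
    rw [e₁, e₂, ← mem_antidiagonal.mp hp, pow_add, Complex.real_smul]
    push_cast
    ring

theorem norm_lt_one_of_summable_bergmanTerm (hα : 1 ≤ α) (ha : a ≠ 0) {l w : ℂ}
    (hgeom : ∀ n, a n = l * binCoeff α n * w ^ n) (hs : Summable (bergmanTerm α a)) :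
    ‖w‖ < 1 := by
  have hl : l ≠ 0 := by
    rintro rfl
    exact ha (funext fun n => by simp [hgeom])
  have hterm : ∀ n, bergmanTerm α a n = ‖l‖ ^ 2 * (‖w‖ ^ 2) ^ n * binCoeff α n := fun n => by
    have hc := (binCoeff_pos (by linarith) n).ne'
    rw [bergmanTerm, hgeom, norm_mul, norm_mul, norm_pow, Complex.norm_real, Real.norm_eq_abs]
    field_simp
    rw [sq_abs]
    ring
  have hgeomSum : Summable fun n => ‖l‖ ^ 2 * (‖w‖ ^ 2) ^ n :=
    hs.of_nonneg_of_le (fun n => by positivity) fun n =>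
      (hterm n).symm ▸ le_mul_of_one_le_right (by positivity) (one_le_binCoeff hα n)
  have hw := summable_geometric_iff_norm_lt_one.mp
    ((summable_mul_left_iff (pow_ne_zero 2 (norm_ne_zero_iff.mpr hl))).mp hgeomSum)
  rw [Real.norm_of_nonneg (by positivity)] at hw
  exact (sq_lt_one_iff₀ (norm_nonneg w)).mp hw

end Bergman

/-- Stated at the level of Taylor coefficients: the product `f₁f₂` has coefficients given by the
Cauchy product, and `fⱼ(z) = λⱼ(1-wz)^{-αⱼ}` means `aⱼ(n) = λⱼ c_{αⱼ}(n) wⁿ`. -/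
theorem logconvexity_equality_iff (α₁ α₂ : ℝ) (h₁ : 1 ≤ α₁) (h₂ : 1 ≤ α₂)
    (a₁ a₂ : ℕ → ℂ)
    (hs₁ : Summable fun n => ‖a₁ n‖ ^ 2 / binCoeff α₁ n)
    (hs₂ : Summable fun n => ‖a₂ n‖ ^ 2 / binCoeff α₂ n)
    (hn₁ : (∑' n, ‖a₁ n‖ ^ 2 / binCoeff α₁ n) ≠ 0)
    (hn₂ : (∑' n, ‖a₂ n‖ ^ 2 / binCoeff α₂ n) ≠ 0) :
    (∑' n, ‖∑ p ∈ Finset.HasAntidiagonal.antidiagonal n, a₁ p.1 * a₂ p.2‖ ^ 2 /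
          binCoeff (α₁ + α₂) n) ^ ((1 : ℝ) / 2) =
        (∑' n, ‖a₁ n‖ ^ 2 / binCoeff α₁ n) ^ ((1 : ℝ) / 2) *
          (∑' n, ‖a₂ n‖ ^ 2 / binCoeff α₂ n) ^ ((1 : ℝ) / 2) ↔
      ∃ (l₁ l₂ w : ℂ), ‖w‖ < 1 ∧
        (∀ n, a₁ n = l₁ * (binCoeff α₁ n : ℂ) * w ^ n) ∧
        (∀ n, a₂ n = l₂ * (binCoeff α₂ n : ℂ) * w ^ n) := by
  have hα₁ : 0 < α₁ := by linarith
  have hα₂ : 0 < α₂ := by linarith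
  have ha₁ : a₁ ≠ 0 := by rintro rfl; simp at hn₁
  have ha₂ : a₂ ≠ 0 := by rintro rfl; simp at hn₂
  refine (Real.rpow_half_eq_mul_rpow_half_iff
    (tsum_nonneg (bergmanTerm_nonneg (add_pos hα₁ hα₂) (cauchyProduct a₁ a₂)))
    (tsum_nonneg (bergmanTerm_nonneg hα₁ a₁)) (tsum_nonneg (bergmanTerm_nonneg hα₂ a₂))).trans ?_
  refine (tsum_bergmanTerm_cauchyProduct_eq_iff hα₁ hα₂ hs₁ hs₂).trans ?_
  rw [exists_geometric_iff_forall_mul_eq_smul (fun n => (binCoeff_pos hα₁ n).ne')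
    (fun n => (binCoeff_pos hα₂ n).ne') ha₁ ha₂]
  constructor
  · rintro ⟨l₁, l₂, w, e₁, e₂⟩
    exact ⟨l₁, l₂, w, norm_lt_one_of_summable_bergmanTerm h₁ ha₁ e₁ hs₁, e₁, e₂⟩
  · rintro ⟨l₁, l₂, w, -, e₁, e₂⟩
    exact ⟨l₁, l₂, w, e₁, e₂⟩
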